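/- In DC_{4n}, for k an integer and m an integer, the subgroup generated by a^k and a^m x equals DC_{4n} if and only if gcd(n, k) = 1. -/

import Mathlib

open QuaternionGroup

lemma a_one_zpow {n : ℕ} (k : ℤ) :
    (a 1 : QuaternionGroup n) ^ k = a (k : ZMod (2 * n)) := by
  induction k using Int.rec with
  | ofNat p => simp [a_one_pow]
  | negSucc p =>
      rw [zpow_negSucc, a_one_pow]
      rw [show (a (↑(p+1)) : QuaternionGroup n)⁻¹ = a (-(↑(p+1))) from rfl]
      push_cast
      ring_nf

/-- In `DC_{4n}`, the subgroup generated by `a^k` and `a^m x` is the whole group iff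
`gcd(n, k) = 1`. -/
theorem dicyclic_ak_amx_generate_iff (n : ℕ) (hn : 2 ≤ n) (k m : ℤ) :
    Subgroup.closure
        ({(QuaternionGroup.a 1 : QuaternionGroup n) ^ k,
          (QuaternionGroup.a 1 : QuaternionGroup n) ^ m * QuaternionGroup.xa 0} :
          Set (QuaternionGroup n)) = ⊤ ↔ Int.gcd (n : ℤ) k = 1 := by
  haveI : NeZero (2 * n) := ⟨by omega⟩
  set d : ℕ := Int.gcd (n : ℤ) k with hd
  constructor
  · intro htop
    -- the subgroup S
    set S : Subgroup (QuaternionGroup n) :=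
      { carrier := {g | match g with
          | QuaternionGroup.a i => (d : ZMod (2 * n)) ∣ i
          | QuaternionGroup.xa j => (d : ZMod (2 * n)) ∣ (j + (m : ZMod (2 * n)))}
        one_mem' := by show (d : ZMod (2 * n)) ∣ (0 : ZMod (2 * n)); exact dvd_zero _
        mul_mem' := by
          rintro (i | i) (j | j) hi hj <;>
            simp only [Set.mem_setOf_eq, a_mul_a, a_mul_xa, xa_mul_a, xa_mul_xa] at *
          · exact dvd_add hi hj
          · have : j - i + (m : ZMod (2*n)) = (j + m) - i := by ring
            rw [this]; exact dvd_sub hj hi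
          · have : i + j + (m : ZMod (2*n)) = (i + m) + j := by ring
            rw [this]; exact dvd_add hi hj
          · have hdn : (d : ZMod (2 * n)) ∣ (n : ZMod (2 * n)) := by
              obtain ⟨c, hc⟩ := (Int.gcd_dvd_left (n : ℤ) k : (d : ℤ) ∣ (n : ℤ))
              exact ⟨(c : ZMod (2*n)), by exact_mod_cast congrArg (Int.cast : ℤ → ZMod (2*n)) hc⟩
            have : (n : ZMod (2*n)) + j - i = (n : ZMod (2*n)) + ((j + m) - (i + m)) := by ring
            rw [this]; exact dvd_add hdn (dvd_sub hj hi)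
        inv_mem' := by
          rintro (i | i) hi <;>
            simp only [Set.mem_setOf_eq] at *
          · rw [show (QuaternionGroup.a i : QuaternionGroup n)⁻¹ = QuaternionGroup.a (-i) from rfl]
            exact (dvd_neg).2 hi
          · rw [show (QuaternionGroup.xa i : QuaternionGroup n)⁻¹
                = QuaternionGroup.xa ((n : ZMod (2*n)) + i) from rfl]
            have hdn : (d : ZMod (2 * n)) ∣ (n : ZMod (2 * n)) := by
              obtain ⟨c, hc⟩ := (Int.gcd_dvd_left (n : ℤ) k : (d : ℤ) ∣ (n : ℤ))
              exact ⟨(c : ZMod (2*n)), by exact_mod_cast congrArg (Int.cast : ℤ → ZMod (2*n)) hc⟩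
            show (d : ZMod (2*n)) ∣ ((n : ZMod (2*n)) + i + (m : ZMod (2*n)))
            have : (n : ZMod (2*n)) + i + (m : ZMod (2*n)) = (n : ZMod (2*n)) + (i + m) := by ring
            rw [this]; exact dvd_add hdn hi }
    have hsub : Subgroup.closure
        ({(QuaternionGroup.a 1 : QuaternionGroup n) ^ k,
          (QuaternionGroup.a 1 : QuaternionGroup n) ^ m * QuaternionGroup.xa 0} :
          Set (QuaternionGroup n)) ≤ S := by
      apply Subgroup.closure_le S |>.2
      rintro g (rfl | rfl)
      · rw [SetLike.mem_coe, a_one_zpow]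
        obtain ⟨c, hc⟩ := (Int.gcd_dvd_right (n : ℤ) k : (d : ℤ) ∣ k)
        exact ⟨(c : ZMod (2*n)), by exact_mod_cast congrArg (Int.cast : ℤ → ZMod (2*n)) hc⟩
      · rw [SetLike.mem_coe, a_one_zpow, a_mul_xa]
        show ((d : ZMod (2*n)) ∣ ((0 : ZMod (2*n)) - (m : ZMod (2*n)) + (m : ZMod (2*n))))
        simp
    have ha1 : (QuaternionGroup.a 1 : QuaternionGroup n) ∈ S := by
      apply hsub; rw [htop]; trivial
    have hdvd : (d : ZMod (2*n)) ∣ (1 : ZMod (2*n)) := ha1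
    have hu : IsUnit (d : ZMod (2*n)) := isUnit_of_dvd_one hdvd
    have hcop : Nat.Coprime d (2 * n) := (ZMod.isUnit_iff_coprime d (2*n)).1 hu
    have hdn : d ∣ n := Int.ofNat_dvd.mp (Int.gcd_dvd_left (n : ℤ) k)
    have h2 : d ∣ 2 * n := hdn.mul_left 2
    have h3 := Nat.dvd_gcd dvd_rfl h2
    rw [hcop] at h3
    exact Nat.dvd_one.mp h3
  · intro hgcd
    rw [eq_top_iff]
    set H := Subgroup.closure
        ({(QuaternionGroup.a 1 : QuaternionGroup n) ^ k,
          (QuaternionGroup.a 1 : QuaternionGroup n) ^ m * QuaternionGroup.xa 0} :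
          Set (QuaternionGroup n)) with hH
    have hk : (QuaternionGroup.a 1 : QuaternionGroup n) ^ k ∈ H :=
      Subgroup.subset_closure (by left; rfl)
    have ht : (QuaternionGroup.a 1 : QuaternionGroup n) ^ m * QuaternionGroup.xa 0 ∈ H :=
      Subgroup.subset_closure (by right; rfl)
    have hn2 : (QuaternionGroup.a 1 : QuaternionGroup n) ^ (n : ℤ) ∈ H := by
      have : ((QuaternionGroup.a 1 : QuaternionGroup n) ^ m * QuaternionGroup.xa 0) ^ 2
          = (QuaternionGroup.a 1 : QuaternionGroup n) ^ (n : ℤ) := by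
        rw [a_one_zpow, a_one_zpow, pow_two]
        simp only [a_mul_xa, xa_mul_xa]
        push_cast
        ring_nf
      exact this ▸ pow_mem ht 2
    have ha1 : (QuaternionGroup.a 1 : QuaternionGroup n) ∈ H := by
      have hcop : IsCoprime (n : ℤ) k := Int.isCoprime_iff_gcd_eq_one.2 hgcd
      obtain ⟨u, v, huv⟩ := hcop
      have : (QuaternionGroup.a 1 : QuaternionGroup n)
          = ((QuaternionGroup.a 1 : QuaternionGroup n) ^ (n : ℤ)) ^ u
            * ((QuaternionGroup.a 1 : QuaternionGroup n) ^ k) ^ v := by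
        rw [← zpow_mul, ← zpow_mul, ← zpow_add]
        rw [show (n : ℤ) * u + k * v = 1 by linarith, zpow_one]
      rw [this]
      exact mul_mem (zpow_mem hn2 u) (zpow_mem hk v)
    have hx0 : (QuaternionGroup.xa 0 : QuaternionGroup n) ∈ H := by
      have : (QuaternionGroup.xa 0 : QuaternionGroup n)
          = ((QuaternionGroup.a 1 : QuaternionGroup n) ^ m)⁻¹
            * ((QuaternionGroup.a 1 : QuaternionGroup n) ^ m * QuaternionGroup.xa 0) := by
        group
      rw [this]
      exact mul_mem (inv_mem (zpow_mem ha1 m)) ht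
    rintro (i | i) -
    · have : (QuaternionGroup.a i : QuaternionGroup n) = QuaternionGroup.a 1 ^ (i.val) := by
        rw [a_one_pow, ZMod.natCast_val, ZMod.cast_id]
      rw [this]; exact pow_mem ha1 _
    · have : (QuaternionGroup.xa i : QuaternionGroup n)
          = QuaternionGroup.xa 0 * QuaternionGroup.a 1 ^ (i.val) := by
        rw [a_one_pow, ZMod.natCast_val, ZMod.cast_id, xa_mul_a, zero_add]
      rw [this]; exact mul_mem hx0 (pow_mem ha1 _)
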